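/- Let d = 2h with h > 2. Then (h−1)·∂(∏_{l=0}^{h+1} (l·v + (d−l)·u)) = (h−1)·(h−2)·(u+v)·∂(∏_{l=0}^{h} (l·v + (d−l)·u)) + (u+v)·h·(h−1)·∂((u+3v)·∏_{l=0}^{h−1} (l·v + (d−l)·u)) in R. -/

import Mathlib

/-!
The products over `l ≤ h` and `l ≤ h + 1` are the product over `l < h` times the symmetric
factor `h(u + v)`, resp. times `h(u + v)` and `(h + 1)v + (h − 1)u = (h − 2)(u + v) + (u + 3v)`.
Since `P ↦ P − P*` is linear over symmetric polynomials, the relation holds after multiplying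
both sides by `u − v`, and `u − v` is a nonzerodivisor of `ℚ[u,v]`.
-/

noncomputable section

abbrev R2 : Type := MvPolynomial (Fin 2) ℚ

def uu : R2 := MvPolynomial.X 0
def vv : R2 := MvPolynomial.X 1

/-- The involution of `R2 = ℚ[u,v]` swapping `u` and `v`; `P*`. -/
def swapUV (P : R2) : R2 := MvPolynomial.rename (Equiv.swap (0 : Fin 2) 1) P

/-- `Q_k(y) = ∏_{j=0}^{k} (y + j·u + (k−j)·v)` in `R2[y]`. -/
def Qp (k : ℕ) : Polynomial R2 :=
  ∏ j ∈ Finset.range (k + 1),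
    (Polynomial.X + Polynomial.C ((j : R2) * uu + ((k - j : ℕ) : R2) * vv))

/-- `C_{d+1} = ∏_{j=0}^{d} (j·u + (d−j)·v)` in `R2`. -/
def Cdtop (d : ℕ) : R2 :=
  ∏ j ∈ Finset.range (d + 1), ((j : R2) * uu + ((d - j : ℕ) : R2) * vv)

/-- `Q_k(x_i)` as an element of `R2[x_1,…,x_r]`. -/
def Qm (r k : ℕ) (i : Fin r) : MvPolynomial (Fin r) R2 :=
  ∏ j ∈ Finset.range (k + 1),
    (MvPolynomial.X i + MvPolynomial.C ((j : R2) * uu + ((k - j : ℕ) : R2) * vv))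

open Finset

@[simp]
lemma swapUV_add (P Q : R2) : swapUV (P + Q) = swapUV P + swapUV Q := map_add _ P Q

@[simp]
lemma swapUV_mul (P Q : R2) : swapUV (P * Q) = swapUV P * swapUV Q := map_mul _ P Q

@[simp]
lemma swapUV_sub (P Q : R2) : swapUV (P - Q) = swapUV P - swapUV Q := map_sub _ P Q

@[simp]
lemma swapUV_one : swapUV 1 = 1 := map_one _

@[simp]
lemma swapUV_natCast (n : ℕ) : swapUV n = n := map_natCast _ n

@[simp]
lemma swapUV_ofNat (n : ℕ) [n.AtLeastTwo] : swapUV (no_index (OfNat.ofNat n)) = OfNat.ofNat n :=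
  map_ofNat _ n

@[simp]
lemma swapUV_uu : swapUV uu = vv := by
  simp [swapUV, uu, vv]

@[simp]
lemma swapUV_vv : swapUV vv = uu := by
  simp [swapUV, uu, vv]

lemma uu_sub_vv_ne_zero : uu - vv ≠ 0 := by
  intro h
  have := congrArg (MvPolynomial.eval ![1, 0]) h
  simp [uu, vv] at this

lemma prod_range_succ_two_mul (h : ℕ) :
    ∏ l ∈ range (h + 1), ((l : R2) * vv + ((2 * h - l : ℕ) : R2) * uu) =
      (∏ l ∈ range h, ((l : R2) * vv + ((2 * h - l : ℕ) : R2) * uu)) * (h * (uu + vv)) := by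
  rw [prod_range_succ, show 2 * h - h = h by omega]
  ring

lemma prod_range_add_two_two_mul (h : ℕ) :
    ∏ l ∈ range (h + 2), ((l : R2) * vv + ((2 * h - l : ℕ) : R2) * uu) =
      (∏ l ∈ range h, ((l : R2) * vv + ((2 * h - l : ℕ) : R2) * uu)) * (h * (uu + vv)) *
        ((h + 1) * vv + (h - 1) * uu) := by
  rw [prod_range_succ, prod_range_succ_two_mul, mul_assoc, mul_assoc, mul_assoc]
  congr 1
  -- for `h = 0` the truncated subtraction `2h − (h + 1)` differs from `h − 1`, but is killed by `h`
  rcases Nat.eq_zero_or_pos h with rfl | hpos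
  · simp
  · rw [show 2 * h - (h + 1) = h - 1 by omega, Nat.cast_sub hpos]
    push_cast
    ring

theorem stmt10_general (h : ℕ) (d : ℕ) (hd : d = 2 * h)
    (D2 D1 D0' : R2)
    (hD2 : (uu - vv) * D2 =
        (∏ l ∈ Finset.range (h + 2), ((l : R2) * vv + ((d - l : ℕ) : R2) * uu)) -
          swapUV (∏ l ∈ Finset.range (h + 2), ((l : R2) * vv + ((d - l : ℕ) : R2) * uu)))
    (hD1 : (uu - vv) * D1 =
        (∏ l ∈ Finset.range (h + 1), ((l : R2) * vv + ((d - l : ℕ) : R2) * uu)) -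
          swapUV (∏ l ∈ Finset.range (h + 1), ((l : R2) * vv + ((d - l : ℕ) : R2) * uu)))
    (hD0' : (uu - vv) * D0' =
        (uu + 3 * vv) * (∏ l ∈ Finset.range h, ((l : R2) * vv + ((d - l : ℕ) : R2) * uu)) -
          swapUV ((uu + 3 * vv) *
            ∏ l ∈ Finset.range h, ((l : R2) * vv + ((d - l : ℕ) : R2) * uu))) :
    ((h : R2) - 1) * D2 =
      ((h : R2) - 1) * ((h : R2) - 2) * (uu + vv) * D1 +
        (uu + vv) * ((h : R2) * ((h : R2) - 1) * D0') := by
  subst hd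
  rw [prod_range_add_two_two_mul] at hD2
  rw [prod_range_succ_two_mul] at hD1
  set Q := ∏ l ∈ range h, ((l : R2) * vv + ((2 * h - l : ℕ) : R2) * uu)
  simp only [swapUV_add, swapUV_mul, swapUV_natCast, swapUV_ofNat, swapUV_uu, swapUV_vv,
    swapUV_sub, swapUV_one] at hD2 hD1 hD0'
  apply mul_left_cancel₀ uu_sub_vv_ne_zero
  linear_combination ((h : R2) - 1) * hD2 - ((h : R2) - 1) * ((h : R2) - 2) * (uu + vv) * hD1 -
    (uu + vv) * (h : R2) * ((h : R2) - 1) * hD0'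

/-- Remark 3.9(1), second relation:
`(h−1)·∂(∏_{l=0}^{h+1}) = (h−1)(h−2)·(u+v)·∂(∏_{l=0}^{h}) + (u+v)·h(h−1)·∂((u+3v)·∏_{l=0}^{h−1})`
for `d = 2h` (i.e. `(h−1)·Tp_{λ_2} = (h−1)(h−2)·c_1·Tp_{λ_1} + c_1·Tp_{λ_0'}`). -/
theorem stmt10 (h : ℕ) (hh : 2 < h) (d : ℕ) (hd : d = 2 * h)
    (D2 D1 D0' : R2)
    (hD2 : (uu - vv) * D2 =
        (∏ l ∈ Finset.range (h + 2), ((l : R2) * vv + ((d - l : ℕ) : R2) * uu)) -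
          swapUV (∏ l ∈ Finset.range (h + 2), ((l : R2) * vv + ((d - l : ℕ) : R2) * uu)))
    (hD1 : (uu - vv) * D1 =
        (∏ l ∈ Finset.range (h + 1), ((l : R2) * vv + ((d - l : ℕ) : R2) * uu)) -
          swapUV (∏ l ∈ Finset.range (h + 1), ((l : R2) * vv + ((d - l : ℕ) : R2) * uu)))
    (hD0' : (uu - vv) * D0' =
        (uu + 3 * vv) * (∏ l ∈ Finset.range h, ((l : R2) * vv + ((d - l : ℕ) : R2) * uu)) -
          swapUV ((uu + 3 * vv) *
            ∏ l ∈ Finset.range h, ((l : R2) * vv + ((d - l : ℕ) : R2) * uu))) :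
    ((h : R2) - 1) * D2 =
      ((h : R2) - 1) * ((h : R2) - 2) * (uu + vv) * D1 +
        (uu + vv) * ((h : R2) * ((h : R2) - 1) * D0') :=
  stmt10_general h d hd D2 D1 D0' hD2 hD1 hD0'
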